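/- The integral ∫_0^1 Li₂(y) · (log(1−y))² dy equals π²/3 − 12 + 4·ζ(3) + π⁴/15, where Li₂(y) = ∑_{n=1}^{∞} y^n/n² and ζ(3) = ∑_{k=1}^{∞} 1/k³. -/

import Mathlib

open MeasureTheory Real Set Filter Topology

section Aux

lemma tendsto_mul_log_pow (k : ℕ) (hk : k ≠ 0) :
    Tendsto (fun x : ℝ => x * Real.log x ^ k) (𝓝[>] (0:ℝ)) (𝓝 0) := by
  have h := (tendsto_log_mul_rpow_nhdsGT_zero (r := (k:ℝ)⁻¹) (by positivity)).pow k
  rw [zero_pow hk] at h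
  refine h.congr' ?_
  filter_upwards [self_mem_nhdsWithin] with x (hx : 0 < x)
  rw [mul_pow, ← Real.rpow_natCast (x ^ ((k:ℝ)⁻¹)) k, ← Real.rpow_mul hx.le,
    inv_mul_cancel₀ (by exact_mod_cast hk), Real.rpow_one]
  ring

lemma contOn_aux (m : ℕ) (a b c d : ℝ) :
    ContinuousOn (fun x : ℝ => x ^ (m+1) * (a * Real.log x ^ 3 + b * Real.log x ^ 2
      + c * Real.log x + d)) (Icc 0 1) := by
  intro x hx
  rcases eq_or_ne x 0 with rfl | hx0
  · rw [← continuousWithinAt_diff_self]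
    have hsub : Icc (0:ℝ) 1 \ {0} ⊆ Ioi 0 := by
      rintro y ⟨⟨hy0, _⟩, hy⟩
      exact lt_of_le_of_ne hy0 (Ne.symm (by simpa using hy))
    have key : Tendsto (fun x : ℝ => x ^ (m+1) * (a * Real.log x ^ 3 + b * Real.log x ^ 2
        + c * Real.log x + d)) (𝓝[>] (0:ℝ)) (𝓝 0) := by
      have hxm : Tendsto (fun x : ℝ => x ^ m) (𝓝[>] (0:ℝ)) (𝓝 ((0:ℝ) ^ m)) :=
        ((continuous_pow m).tendsto 0).mono_left nhdsWithin_le_nhds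
      have hx1 : Tendsto (fun x : ℝ => x) (𝓝[>] (0:ℝ)) (𝓝 0) :=
        tendsto_id.mono_left nhdsWithin_le_nhds
      have h3 := tendsto_mul_log_pow 3 (by norm_num)
      have h2 := tendsto_mul_log_pow 2 (by norm_num)
      have h1 := tendsto_mul_log_pow 1 (by norm_num)
      have : Tendsto (fun x : ℝ => x ^ m * (a * (x * Real.log x ^ 3)
          + b * (x * Real.log x ^ 2) + c * (x * Real.log x ^ 1) + d * x))
          (𝓝[>] (0:ℝ)) (𝓝 ((0:ℝ)^m * (a * 0 + b * 0 + c * 0 + d * 0))) :=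
        hxm.mul ((((h3.const_mul a).add (h2.const_mul b)).add (h1.const_mul c)).add
          (hx1.const_mul d))
      simpa using this.congr (by intro x; ring)
    rw [ContinuousWithinAt]
    simp only [zero_pow (Nat.succ_ne_zero m), zero_mul]
    exact key.mono_left (nhdsWithin_mono _ hsub)
  · have hxpos : (0:ℝ) < x := lt_of_le_of_ne hx.1 (Ne.symm hx0)
    exact (((continuous_pow (m+1)).continuousAt).mul
      ((((((Real.continuousAt_log hx0).pow 3).const_mul a).add
      (((Real.continuousAt_log hx0).pow 2).const_mul b)).add
      (((Real.continuousAt_log hx0)).const_mul c)).add continuousAt_const)).continuousWithinAt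

lemma hasDerivAt_aux (m : ℕ) (a b c d : ℝ) {x : ℝ} (hx0 : x ≠ 0) :
    HasDerivAt (fun x : ℝ => x ^ (m+1) * (a * Real.log x ^ 3 + b * Real.log x ^ 2
      + c * Real.log x + d))
      (x ^ m * (((m:ℝ)+1) * a * Real.log x ^ 3 + (((m:ℝ)+1) * b + 3*a) * Real.log x ^ 2
        + (((m:ℝ)+1) * c + 2*b) * Real.log x + (((m:ℝ)+1) * d + c))) x := by
  have hlog := Real.hasDerivAt_log hx0
  have h := (hasDerivAt_pow (m+1) x).mul
    (((((hlog.pow 3).const_mul a).add ((hlog.pow 2).const_mul b)).add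
      (hlog.const_mul c)).add (hasDerivAt_const x d))
  refine h.congr_deriv ?_
  have hxm : x ^ (m+1) = x ^ m * x := pow_succ x m
  simp only [Pi.add_apply, Pi.pow_apply, Nat.add_sub_cancel]
  push_cast
  field_simp
  ring

lemma ftc_nonpos {g g' : ℝ → ℝ} (hcont : ContinuousOn g (Icc 0 1))
    (hderiv : ∀ x ∈ Ioo (0:ℝ) 1, HasDerivAt g (g' x) x)
    (hsign : ∀ x ∈ Ioo (0:ℝ) 1, g' x ≤ 0) :
    IntegrableOn g' (Ioo 0 1) ∧ ∫ x in Ioo (0:ℝ) 1, g' x = g 1 - g 0 := by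
  have hint : IntegrableOn (fun x => -g' x) (Ioc (0:ℝ) 1) :=
    intervalIntegral.integrableOn_deriv_of_nonneg hcont.neg (fun x hx => (hderiv x hx).neg)
      (fun x hx => by simpa using hsign x hx)
  have hint2 : IntegrableOn g' (Ioc (0:ℝ) 1) := by
    have h2 := hint.neg
    have : (-fun x => -g' x) = g' := by funext x; simp
    rwa [this] at h2
  have hii : IntervalIntegrable g' volume 0 1 :=
    (intervalIntegrable_iff_integrableOn_Ioc_of_le (by norm_num)).2 hint2
  refine ⟨hint2.mono_set Ioo_subset_Ioc_self, ?_⟩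
  have := intervalIntegral.integral_eq_sub_of_hasDeriv_right_of_le (by norm_num) hcont
    (fun x hx => (hderiv x hx).hasDerivWithinAt) hii
  rw [← this, intervalIntegral.integral_of_le (by norm_num : (0:ℝ) ≤ 1),
    integral_Ioc_eq_integral_Ioo]

lemma term_integral (m : ℕ) :
    IntegrableOn (fun x : ℝ => x ^ (m+1) * (Real.log x ^ 3 - 2 * Real.log x ^ 2
      + 2 * Real.log x)) (Ioo 0 1) ∧
    ∫ x in Ioo (0:ℝ) 1, x ^ (m+1) * (Real.log x ^ 3 - 2 * Real.log x ^ 2 + 2 * Real.log x)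
      = -(2/((m:ℝ)+2)^2 + 4/((m:ℝ)+2)^3 + 6/((m:ℝ)+2)^4) := by
  set K : ℝ := (m:ℝ) + 2 with hK
  have hK0 : K ≠ 0 := by positivity
  set A : ℝ := 1/K
  set B : ℝ := (-2*K - 3)/K^2
  set C : ℝ := (2*K^2 + 4*K + 6)/K^3
  set D : ℝ := -(2*K^2 + 4*K + 6)/K^4
  have hderiv : ∀ x ∈ Ioo (0:ℝ) 1, HasDerivAt
      (fun x : ℝ => x ^ ((m+1)+1) * (A * Real.log x ^ 3 + B * Real.log x ^ 2
        + C * Real.log x + D))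
      (x ^ (m+1) * (Real.log x ^ 3 - 2 * Real.log x ^ 2 + 2 * Real.log x)) x := by
    intro x hx
    have h := hasDerivAt_aux (m+1) A B C D (ne_of_gt hx.1)
    convert h using 1
    have hcast : ((m+1 : ℕ):ℝ) + 1 = K := by push_cast [hK]; ring
    rw [hcast]
    simp only [A, B, C, D]
    field_simp
    ring
  have hsign : ∀ x ∈ Ioo (0:ℝ) 1,
      x ^ (m+1) * (Real.log x ^ 3 - 2 * Real.log x ^ 2 + 2 * Real.log x) ≤ 0 := by
    intro x hx
    have hl : Real.log x ≤ 0 := Real.log_nonpos hx.1.le hx.2.le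
    have hxp : (0:ℝ) ≤ x ^ (m+1) := pow_nonneg hx.1.le _
    apply mul_nonpos_of_nonneg_of_nonpos hxp
    nlinarith [sq_nonneg (Real.log x - 1), sq_nonneg (Real.log x)]
  obtain ⟨hint, hval⟩ := ftc_nonpos (contOn_aux (m+1) A B C D) hderiv hsign
  refine ⟨hint, ?_⟩
  rw [hval]
  simp only [Real.log_one, Real.log_zero]
  norm_num
  simp only [A, B, C, D]
  field_simp
  ring

lemma summable_inv_pow {p : ℕ} (hp : 2 ≤ p) : Summable (fun n : ℕ => 1/((n:ℝ)+1)^p) := by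
  have h : Summable (fun n : ℕ => 1/(n:ℝ)^p) :=
    Real.summable_one_div_nat_pow.mpr (by omega)
  have h2 := (summable_nat_add_iff 1).mpr h
  refine h2.congr fun n => ?_
  push_cast
  ring

noncomputable def Li2f (y : ℝ) : ℝ := ∑' n : ℕ, y ^ (n+1) / ((n:ℝ)+1)^2
noncomputable def Vf (y : ℝ) : ℝ := (y - 1) * (Real.log (1-y) ^ 2 - 2 * Real.log (1-y) + 2)
noncomputable def Wf (x : ℝ) : ℝ :=
  (1/(1-x) - 1) * (Real.log x ^ 3 - 2 * Real.log x ^ 2 + 2 * Real.log x)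

lemma Li2_cont : ContinuousOn Li2f (Icc 0 1) := by
  apply continuousOn_tsum (u := fun n : ℕ => 1/((n:ℝ)+1)^2)
  · exact fun n => (continuous_pow (n+1)).continuousOn.div_const _
  · exact summable_inv_pow le_rfl
  · intro n x hx
    rw [norm_div, norm_pow, Real.norm_eq_abs (((n:ℝ)+1)^2),
      abs_of_pos (by positivity : (0:ℝ) < ((n:ℝ)+1)^2)]
    gcongr
    exact pow_le_one₀ (norm_nonneg x)
      (by rw [Real.norm_eq_abs, abs_le]; exact ⟨by linarith [hx.1], hx.2⟩)

lemma Li2_hasDerivAt {y : ℝ} (hy : y ∈ Ioo (0:ℝ) 1) :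
    HasDerivAt Li2f (-Real.log (1-y) / y) y := by
  obtain ⟨hy0, hy1⟩ := hy
  set r : ℝ := (1+y)/2 with hr
  have hr0 : 0 < r := by positivity
  have hr1 : r < 1 := by simp only [hr]; linarith
  have hyr : y < r := by simp only [hr]; linarith
  have key : HasDerivAt (fun z : ℝ => ∑' n : ℕ, z ^ (n+1) / ((n:ℝ)+1)^2)
      (∑' n : ℕ, y ^ n / ((n:ℝ)+1)) y := by
    apply hasDerivAt_tsum_of_isPreconnected (u := fun n : ℕ => r ^ n)
      (summable_geometric_of_lt_one hr0.le hr1) (isOpen_Ioo (a := -r) (b := r))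
      (convex_Ioo _ _).isPreconnected
      (g' := fun n z => z ^ n / ((n:ℝ)+1)) (y₀ := 0)
    · intro n z hz
      have h := (hasDerivAt_pow (n+1) z).div_const (((n:ℝ)+1)^2)
      refine h.congr_deriv ?_
      have : ((n:ℝ)+1) ≠ 0 := by positivity
      rw [Nat.add_sub_cancel]
      push_cast
      field_simp
    · intro n z hz
      have hz' : |z| ≤ r := abs_le.2 ⟨hz.1.le, hz.2.le⟩
      calc ‖z^n/((n:ℝ)+1)‖ = |z|^n/((n:ℝ)+1) := by
            rw [norm_div, norm_pow, Real.norm_eq_abs, Real.norm_eq_abs,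
              abs_of_pos (by positivity : (0:ℝ) < (n:ℝ)+1)]
        _ ≤ r^n/((n:ℝ)+1) := by
            gcongr
        _ ≤ r^n := div_le_self (pow_nonneg hr0.le n)
            (by linarith [Nat.cast_nonneg (α := ℝ) n])
    · exact ⟨by linarith, by linarith⟩
    · refine (summable_zero).congr fun n => ?_
      simp
    · exact ⟨by linarith, hyr⟩
  have hsum : HasSum (fun n : ℕ => y ^ n / ((n:ℝ)+1)) (-Real.log (1-y) / y) := by
    have h := hasSum_pow_div_log_of_abs_lt_one (x := y) (by rw [abs_of_pos hy0]; exact hy1)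
    have h2 := h.div_const y
    refine h2.congr_fun fun n => ?_
    rw [pow_succ]
    field_simp
  rw [hsum.tsum_eq] at key
  exact key

lemma Li2_zero : Li2f 0 = 0 := by
  rw [Li2f]
  convert tsum_zero with n
  simp

lemma Vf_cont : ContinuousOn Vf (Icc 0 1) := by
  have h := ((contOn_aux 0 0 1 (-2) 2).comp
    (continuousOn_const.sub continuousOn_id) (fun y hy => ⟨by simp [hy.2], by simp [hy.1]⟩)
    : ContinuousOn (fun y : ℝ => (1-y) ^ (0+1) * (0 * Real.log (1-y) ^ 3
        + 1 * Real.log (1-y) ^ 2 + (-2) * Real.log (1-y) + 2)) (Icc 0 1))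
  refine h.neg.congr fun y hy => ?_
  simp only [Vf, Function.comp, pow_one, Pi.neg_apply, Function.comp_apply]
  ring

lemma log_one_sub_hasDerivAt {y : ℝ} (hy1 : y < 1) :
    HasDerivAt (fun y : ℝ => Real.log (1-y)) (-(1-y)⁻¹) y := by
  have h1 : (0:ℝ) < 1 - y := by linarith
  have h := (Real.hasDerivAt_log h1.ne').comp y ((hasDerivAt_id y).const_sub 1)
  refine h.congr_deriv ?_
  simp

lemma Vf_hasDerivAt {y : ℝ} (hy : y ∈ Ioo (0:ℝ) 1) :
    HasDerivAt Vf (Real.log (1-y) ^ 2) y := by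
  have h1 : (0:ℝ) < 1 - y := by linarith [hy.2]
  have hL := log_one_sub_hasDerivAt hy.2
  have hinner : HasDerivAt (fun y : ℝ => Real.log (1-y) ^ 2 - 2 * Real.log (1-y) + 2)
      ((2:ℕ) * Real.log (1-y) ^ 1 * (-(1-y)⁻¹) - 2 * (-(1-y)⁻¹)) y :=
    ((hL.pow 2).sub (hL.const_mul 2)).add_const 2
  have h := ((hasDerivAt_id y).sub_const 1).mul hinner
  refine h.congr_deriv ?_
  have hne : (1:ℝ) - y ≠ 0 := h1.ne'
  simp only [id]
  field_simp
  ring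

lemma ibp_step :
    ∫ y in (0:ℝ)..1, Li2f y * Real.log (1-y) ^ 2
      = - ∫ x in (0:ℝ)..1, Wf x := by
  have h01 : (0:ℝ) ≤ 1 := by norm_num
  have huIcc : uIcc (0:ℝ) 1 = Icc 0 1 := uIcc_of_le h01
  have hmin : min (0:ℝ) 1 = 0 := by norm_num
  have hmax : max (0:ℝ) 1 = 1 := by norm_num
  have hu' : IntervalIntegrable (fun y : ℝ => -Real.log (1-y) / y) volume 0 1 := by
    apply intervalIntegral.intervalIntegrable_deriv_of_nonneg (g := Li2f)
    · rw [huIcc]; exact Li2_cont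
    · rw [hmin, hmax]; exact fun x hx => Li2_hasDerivAt hx
    · rw [hmin, hmax]
      intro x hx
      have : Real.log (1-x) ≤ 0 := Real.log_nonpos (by linarith [hx.2]) (by linarith [hx.1])
      exact div_nonneg (by linarith) hx.1.le
  have hv' : IntervalIntegrable (fun y : ℝ => Real.log (1-y) ^ 2) volume 0 1 := by
    apply intervalIntegral.intervalIntegrable_deriv_of_nonneg (g := Vf)
    · rw [huIcc]; exact Vf_cont
    · rw [hmin, hmax]; exact fun x hx => Vf_hasDerivAt hx
    · rw [hmin, hmax]; exact fun x _ => sq_nonneg _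
  have ibp := intervalIntegral.integral_mul_deriv_eq_deriv_mul_of_hasDeriv_right
    (u := Li2f) (v := Vf) (u' := fun y => -Real.log (1-y) / y)
    (v' := fun y => Real.log (1-y) ^ 2)
    (by rw [huIcc]; exact Li2_cont) (by rw [huIcc]; exact Vf_cont)
    (by rw [hmin, hmax]; exact fun x hx => (Li2_hasDerivAt hx).hasDerivWithinAt)
    (by rw [hmin, hmax]; exact fun x hx => (Vf_hasDerivAt hx).hasDerivWithinAt)
    hu' hv'
  rw [ibp, Li2_zero]
  have hV1 : Vf 1 = 0 := by simp [Vf]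
  rw [hV1]
  simp only [mul_zero, zero_mul, zero_sub, neg_zero, neg_inj]
  have hcongr : ∀ y ∈ Icc (0:ℝ) 1, (-Real.log (1-y) / y) * Vf y = Wf (1-y) := by
    intro y hy
    rcases eq_or_ne y 0 with rfl | hy0
    · simp [Vf, Wf]
    · have hyne : y ≠ 0 := hy0
      simp only [Vf, Wf]
      have : (1:ℝ) - (1 - y) = y := by ring
      rw [this]
      field_simp
      ring
  have goal_eq : ∫ y in (0:ℝ)..1, (-Real.log (1-y) / y) * Vf y
      = ∫ x in (0:ℝ)..1, Wf x := by
    calc ∫ y in (0:ℝ)..1, (-Real.log (1-y) / y) * Vf y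
        = ∫ y in (0:ℝ)..1, Wf (1-y) := by
          apply intervalIntegral.integral_congr
          rw [huIcc]; exact hcongr
      _ = ∫ x in (0:ℝ)..1, Wf x := by
          have := intervalIntegral.integral_comp_sub_left (a := 0) (b := 1) Wf 1
          simpa using this
  rw [goal_eq]

lemma summable_shift {p : ℕ} (hp : 2 ≤ p) : Summable (fun m : ℕ => 1/((m:ℝ)+2)^p) := by
  have h := (summable_nat_add_iff 1).mpr (summable_inv_pow hp)
  refine h.congr fun m => ?_
  push_cast
  ring

lemma W_integral :
    ∫ x in Ioo (0:ℝ) 1, Wf x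
      = ∑' m : ℕ, -(2/((m:ℝ)+2)^2 + 4/((m:ℝ)+2)^3 + 6/((m:ℝ)+2)^4) := by
  set F : ℕ → ℝ → ℝ := fun m x => x ^ (m+1) * (Real.log x ^ 3 - 2 * Real.log x ^ 2
      + 2 * Real.log x) with hF
  have hFint : ∀ m, Integrable (F m) (volume.restrict (Ioo (0:ℝ) 1)) :=
    fun m => (term_integral m).1
  have hnorm : ∀ m : ℕ, ∫ x in Ioo (0:ℝ) 1, ‖F m x‖
      = 2/((m:ℝ)+2)^2 + 4/((m:ℝ)+2)^3 + 6/((m:ℝ)+2)^4 := by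
    intro m
    have heq : ∀ x ∈ Ioo (0:ℝ) 1, ‖F m x‖ = -(F m x) := by
      intro x hx
      rw [Real.norm_eq_abs, abs_of_nonpos]
      have hl : Real.log x ≤ 0 := Real.log_nonpos hx.1.le hx.2.le
      have hxp : (0:ℝ) ≤ x ^ (m+1) := pow_nonneg hx.1.le _
      apply mul_nonpos_of_nonneg_of_nonpos hxp
      nlinarith [sq_nonneg (Real.log x - 1), sq_nonneg (Real.log x)]
    rw [setIntegral_congr_fun measurableSet_Ioo heq, integral_neg, (term_integral m).2]
    ring
  have hs2 : Summable (fun m : ℕ => 2/((m:ℝ)+2)^2) :=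
    ((summable_shift le_rfl).mul_left 2).congr fun m => by rw [mul_one_div]
  have hs3 : Summable (fun m : ℕ => 4/((m:ℝ)+2)^3) :=
    ((summable_shift (p := 3) (by norm_num)).mul_left 4).congr fun m => by rw [mul_one_div]
  have hs4 : Summable (fun m : ℕ => 6/((m:ℝ)+2)^4) :=
    ((summable_shift (p := 4) (by norm_num)).mul_left 6).congr fun m => by rw [mul_one_div]
  have hcf : Summable (fun m : ℕ => 2/((m:ℝ)+2)^2 + 4/((m:ℝ)+2)^3 + 6/((m:ℝ)+2)^4) :=
    (hs2.add hs3).add hs4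
  have hsummable : Summable (fun m : ℕ => ∫ x in Ioo (0:ℝ) 1, ‖F m x‖) :=
    hcf.congr (fun m => (hnorm m).symm)
  have key := integral_tsum_of_summable_integral_norm hFint hsummable
  have hW : ∀ x ∈ Ioo (0:ℝ) 1, Wf x = ∑' m : ℕ, F m x := by
    intro x hx
    have hgeom : HasSum (fun m : ℕ => x ^ (m+1)) (1/(1-x) - 1) := by
      have h := hasSum_geometric_of_lt_one hx.1.le hx.2
      have h2 : HasSum (fun n : ℕ => x ^ n) ((1/(1-x) - 1) + ∑ i ∈ Finset.range 1, x ^ i) := by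
        rw [Finset.sum_range_one, pow_zero, one_div]
        convert h using 1
        ring
      exact (hasSum_nat_add_iff (f := fun n : ℕ => x ^ n) 1).mpr h2
    have := hgeom.mul_right (Real.log x ^ 3 - 2 * Real.log x ^ 2 + 2 * Real.log x)
    rw [Wf, ← this.tsum_eq]
  rw [setIntegral_congr_fun measurableSet_Ioo hW, ← key]
  congr 1
  funext m
  exact (term_integral m).2

lemma hasSum_S2 : HasSum (fun n : ℕ => 1/((n:ℝ)+1)^2) (π^2/6) := by
  have h : HasSum (fun n : ℕ => (1:ℝ)/(n:ℝ)^2)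
      (π^2/6 + ∑ i ∈ Finset.range 1, (1:ℝ)/(i:ℝ)^2) := by
    simpa using hasSum_zeta_two
  have h2 := (hasSum_nat_add_iff (f := fun n : ℕ => (1:ℝ)/(n:ℝ)^2) 1).mpr h
  refine h2.congr_fun fun n => ?_
  push_cast
  ring

lemma hasSum_S4 : HasSum (fun n : ℕ => 1/((n:ℝ)+1)^4) (π^4/90) := by
  have h : HasSum (fun n : ℕ => (1:ℝ)/(n:ℝ)^4)
      (π^4/90 + ∑ i ∈ Finset.range 1, (1:ℝ)/(i:ℝ)^4) := by
    simpa using hasSum_zeta_four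
  have h2 := (hasSum_nat_add_iff (f := fun n : ℕ => (1:ℝ)/(n:ℝ)^4) 1).mpr h
  refine h2.congr_fun fun n => ?_
  push_cast
  ring

lemma hasSum_shift {p : ℕ} {S : ℝ} (h : HasSum (fun n : ℕ => 1/((n:ℝ)+1)^p) S) :
    HasSum (fun m : ℕ => 1/((m:ℝ)+2)^p) (S - 1) := by
  have h2 : HasSum (fun n : ℕ => 1/((n:ℝ)+1)^p)
      ((S - 1) + ∑ i ∈ Finset.range 1, 1/((i:ℝ)+1)^p) := by
    have he : (∑ i ∈ Finset.range 1, 1/((i:ℝ)+1)^p) = 1 := by simp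
    rw [he, sub_add_cancel]
    exact h
  have h3 := (hasSum_nat_add_iff (f := fun n : ℕ => 1/((n:ℝ)+1)^p) 1).mpr h2
  refine h3.congr_fun fun m => ?_
  push_cast
  ring

lemma final_sum :
    ∑' m : ℕ, -(2/((m:ℝ)+2)^2 + 4/((m:ℝ)+2)^3 + 6/((m:ℝ)+2)^4)
      = -(2*(π^2/6 - 1) + 4*((∑' k : ℕ, 1/((k:ℝ)+1)^3) - 1) + 6*(π^4/90 - 1)) := by
  have h2 := hasSum_shift hasSum_S2
  have h3 := hasSum_shift (summable_inv_pow (p := 3) (by norm_num)).hasSum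
  have h4 := hasSum_shift hasSum_S4
  have htot := (((h2.mul_left 2).add (h3.mul_left 4)).add (h4.mul_left 6)).neg
  refine HasSum.tsum_eq (htot.congr_fun fun m => ?_)
  field_simp

end Aux

/-- `∫₀¹ Li₂(y) log²(1-y) dy = π²/3 - 12 + 4ζ(3) + π⁴/15`. -/
theorem integral_dilog_sq_log :
    (∫ y in Set.Ioo (0 : ℝ) 1,
        (∑' n : ℕ, y ^ (n + 1) / ((n : ℝ) + 1) ^ 2) * Real.log (1 - y) ^ 2)
      = Real.pi ^ 2 / 3 - 12 + 4 * (∑' k : ℕ, 1 / ((k : ℝ) + 1) ^ 3) + Real.pi ^ 4 / 15 := by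
  have step1 : (∫ y in Set.Ioo (0 : ℝ) 1,
      (∑' n : ℕ, y ^ (n + 1) / ((n : ℝ) + 1) ^ 2) * Real.log (1 - y) ^ 2)
      = ∫ y in (0:ℝ)..1, Li2f y * Real.log (1-y) ^ 2 := by
    rw [intervalIntegral.integral_of_le (by norm_num : (0:ℝ) ≤ 1),
      integral_Ioc_eq_integral_Ioo]
    rfl
  rw [step1, ibp_step, intervalIntegral.integral_of_le (by norm_num : (0:ℝ) ≤ 1),
    integral_Ioc_eq_integral_Ioo, W_integral, final_sum]
  ring
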